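/- For n ∈ ℕ, λ ∈ ℝ and k ∈ ℤ let w_{n,λ}(k) := (2π/n) ∑_{s=1}^{n−1} 1{2πs/n ≤ λ} e^{-2πiks/n} ∈ ℂ. There exists a constant K < ∞ such that for every integer n ≥ 2 and every λ ∈ [0, π], ∑_{k=−(n−1)}^{n−1} |w_{n,λ}(k)| ≤ K · log n. -/

import Mathlib

open Real

/-- The lag-window weight `w_{n,λ}(k) = (2π/n) ∑_{s=1}^{n-1} 1{2πs/n ≤ λ} e^{-2πiks/n}`. -/
noncomputable def lagWeight (n : ℕ) (lam : ℝ) (k : ℤ) : ℂ :=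
  (2 * π / n) * ∑ s ∈ Finset.Icc 1 (n - 1),
    (if 2 * π * s / n ≤ lam then
      Complex.exp (-2 * π * Complex.I * ((k : ℤ) : ℂ) * (s : ℂ) / (n : ℂ)) else 0)

/-! For `0 < k < n` the weight `w_{n,λ}(k)` is `2π/n` times a partial geometric sum of
`z = e^{-2πik/n}`, hence at most `(2π/n) · 2/|z - 1| = 2π/(n sin(πk/n))` in modulus. Jordan's
inequality gives `sin(πx) ≥ 2x(1 - x)` on `[0, 1]`, so `|w_{n,λ}(k)| ≤ π(1/k + 1/(n - k))`.
As `w_{n,λ}(-k)` is the conjugate of `w_{n,λ}(k)` and `|w_{n,λ}(0)| ≤ 2π`, the whole sum is at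
most `2π + 4π H_{n-1} = O(log n)`. -/

open Complex ComplexConjugate Finset

lemma norm_geom_sum_Icc_one_le {z : ℂ} (hz : ‖z‖ = 1) (hz1 : z ≠ 1) (M : ℕ) :
    ‖∑ s ∈ Icc 1 M, z ^ s‖ ≤ 2 / ‖z - 1‖ := by
  rw [← Ico_add_one_right_eq_Icc, geom_sum_Ico hz1 (by omega), norm_div]
  gcongr
  calc ‖z ^ (M + 1) - z ^ 1‖ ≤ ‖z ^ (M + 1)‖ + ‖z ^ 1‖ := norm_sub_le _ _
    _ = 2 := by simp only [norm_pow, hz, one_pow]; norm_num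

lemma two_mul_mul_one_sub_le_sin_pi_mul {x : ℝ} (h0 : 0 ≤ x) (h1 : x ≤ 1) :
    2 * x * (1 - x) ≤ Real.sin (π * x) := by
  have jordan : ∀ y : ℝ, 0 ≤ y → y ≤ 1 / 2 → 2 * y ≤ Real.sin (π * y) := fun y hy0 hy1 => by
    have := Real.mul_le_sin (x := π * y) (by positivity) (by nlinarith [pi_pos])
    rwa [show 2 / π * (π * y) = 2 * y by field_simp] at this
  rcases le_total x (1 / 2) with h | h
  · nlinarith [jordan x h0 h]
  · have := jordan (1 - x) (by linarith) (by linarith)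
    rw [show π * (1 - x) = π - π * x by ring, Real.sin_pi_sub] at this
    nlinarith

lemma sum_Icc_neg_eq {M : Type*} [AddCommMonoid M] (f : ℤ → M) (N : ℕ) :
    ∑ k ∈ Icc (-(N : ℤ)) N, f k = f 0 + ∑ k ∈ Icc 1 N, (f k + f (-k)) := by
  induction N with
  | zero => simp
  | succ N ih =>
    have hIcc : Icc (-((N + 1 : ℕ) : ℤ)) (N + 1 : ℕ) =
        insert ((N + 1 : ℕ) : ℤ) (insert (-((N + 1 : ℕ) : ℤ)) (Icc (-(N : ℤ)) N)) := by
      ext a; simp only [mem_insert, mem_Icc]; omega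
    rw [hIcc, sum_insert (by simp; omega), sum_insert (by simp), ih,
      sum_Icc_succ_top (by omega)]
    abel

lemma sum_Icc_one_sub_reflect {M : Type*} [AddCommMonoid M] (f : ℕ → M) (N : ℕ) :
    ∑ k ∈ Icc 1 N, f (N + 1 - k) = ∑ k ∈ Icc 1 N, f k := by
  rw [← Ico_add_one_right_eq_Icc, sum_Ico_reflect f 1 (Nat.le_succ (N + 1))]
  congr 2; omega

lemma exists_lagWeight_eq_geom_sum {n : ℕ} (hn : 0 < n) (lam : ℝ) (k : ℤ) :
    ∃ M ≤ n - 1,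
      lagWeight n lam k = (2 * π / n) * ∑ s ∈ Icc 1 M, cexp (I * ↑(-2 * π * k / n)) ^ s := by
  refine ⟨min (n - 1) ⌊lam * n / (2 * π)⌋₊, min_le_left _ _, ?_⟩
  have hcond : ∀ s : ℕ, 1 ≤ s → (2 * π * s / n ≤ lam ↔ s ≤ ⌊lam * n / (2 * π)⌋₊) :=
    fun s hs => by
      rw [Nat.le_floor_iff' (by omega), div_le_iff₀ (by positivity), le_div_iff₀ (by positivity)]
      constructor <;> intro h <;> linarith
  rw [lagWeight, ← sum_filter]
  congr 1
  refine sum_congr (ext fun s => ?_) fun s _ => ?_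
  · simp only [mem_filter, mem_Icc, le_min_iff]
    constructor
    · rintro ⟨⟨hs1, hsn⟩, hs⟩
      exact ⟨hs1, hsn, (hcond s hs1).1 hs⟩
    · rintro ⟨hs1, hsn, hs⟩
      exact ⟨⟨hs1, hsn⟩, (hcond s hs1).2 hs⟩
  · rw [← Complex.exp_nat_mul]
    push_cast
    ring_nf

lemma norm_two_pi_div_natCast (n : ℕ) : ‖(2 * π / n : ℂ)‖ = 2 * π / n := by
  simp [abs_of_pos pi_pos]

lemma norm_lagWeight_le (n : ℕ) (lam : ℝ) (k : ℤ) : ‖lagWeight n lam k‖ ≤ 2 * π := by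
  rcases Nat.eq_zero_or_pos n with rfl | hn
  · simp [lagWeight, pi_pos.le]
  obtain ⟨M, hM, hw⟩ := exists_lagWeight_eq_geom_sum hn lam k
  have hMn : (M : ℝ) ≤ n := by exact_mod_cast hM.trans (Nat.sub_le n 1)
  rw [hw, norm_mul, norm_two_pi_div_natCast]
  calc 2 * π / n * ‖∑ s ∈ Icc 1 M, cexp (I * ↑(-2 * π * k / n)) ^ s‖
      ≤ 2 * π / n * ∑ s ∈ Icc 1 M, ‖cexp (I * ↑(-2 * π * k / n)) ^ s‖ := by
        gcongr
        exact norm_sum_le _ _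
    _ = 2 * π / n * M := by
        simp only [norm_pow, norm_exp_I_mul_ofReal, one_pow, sum_const, Nat.card_Icc,
          Nat.add_sub_cancel, nsmul_eq_mul, mul_one]
    _ ≤ 2 * π / n * n := by gcongr
    _ = 2 * π := div_mul_cancel₀ _ (by positivity)

lemma lagWeight_neg (n : ℕ) (lam : ℝ) (k : ℤ) :
    lagWeight n lam (-k) = conj (lagWeight n lam k) := by
  rw [lagWeight, lagWeight, map_mul, map_sum]
  congr 1
  · simp only [map_div₀, map_mul, map_ofNat, conj_ofReal, map_natCast]
  · refine sum_congr rfl fun s _ => ?_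
    rw [apply_ite conj, map_zero, ← Complex.exp_conj]
    congr 2
    simp only [map_div₀, map_mul, map_neg, conj_I, conj_ofReal, map_ofNat, map_intCast,
      map_natCast]
    push_cast
    ring

lemma norm_lagWeight_le_of_lt {n k : ℕ} (hk : 0 < k) (hkn : k < n) (lam : ℝ) :
    ‖lagWeight n lam k‖ ≤ π * (1 / k + 1 / (n - k : ℕ)) := by
  have hn : 0 < n := hk.trans hkn
  have hx0 : (0 : ℝ) < k / n := by positivity
  have hx1 : (k : ℝ) / n < 1 := (div_lt_one (by positivity)).2 (by exact_mod_cast hkn)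
  set z := cexp (I * ↑(-2 * π * k / n))
  have hz : ‖z - 1‖ = 2 * Real.sin (π * (k / n)) := by
    rw [norm_exp_I_mul_ofReal_sub_one, show -2 * π * k / n / 2 = -(π * (k / n)) by ring,
      Real.sin_neg, mul_neg, norm_neg, Real.norm_eq_abs, abs_of_pos]
    exact mul_pos two_pos (sin_pos_of_pos_of_lt_pi (by positivity) (by nlinarith [pi_pos]))
  have hsin := two_mul_mul_one_sub_le_sin_pi_mul hx0.le hx1.le
  have hz1 : z ≠ 1 := fun h => by
    rw [h, sub_self, norm_zero] at hz
    nlinarith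
  obtain ⟨M, -, hw⟩ := exists_lagWeight_eq_geom_sum hn lam k
  rw [hw, norm_mul, norm_two_pi_div_natCast]
  calc 2 * π / n * ‖∑ s ∈ Icc 1 M, z ^ s‖
      ≤ 2 * π / n * (2 / ‖z - 1‖) := by
        gcongr
        exact norm_geom_sum_Icc_one_le (norm_exp_I_mul_ofReal _) hz1 _
    _ ≤ 2 * π / n * (2 / (2 * (2 * (k / n) * (1 - k / n)))) := by
        rw [hz]
        gcongr
    _ = π * (1 / k + 1 / (n - k : ℕ)) := by
        have : (n : ℝ) - k ≠ 0 := sub_ne_zero.2 (by exact_mod_cast hkn.ne')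
        rw [Nat.cast_sub hkn.le]
        field_simp
        ring

lemma sum_norm_lagWeight_le (N : ℕ) (lam : ℝ) :
    ∑ k ∈ Icc (-(N : ℤ)) N, ‖lagWeight (N + 1) lam k‖ ≤ 2 * π + 4 * π * harmonic N := by
  have hpair : ∀ k ∈ Icc 1 N, ‖lagWeight (N + 1) lam k‖ + ‖lagWeight (N + 1) lam (-k)‖ ≤
      2 * π * (1 / k + 1 / (N + 1 - k : ℕ)) := fun k hk => by
    rw [mem_Icc] at hk
    rw [lagWeight_neg, norm_conj]
    linarith [norm_lagWeight_le_of_lt (n := N + 1) hk.1 (by omega) lam]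
  rw [sum_Icc_neg_eq]
  calc _ ≤ 2 * π + ∑ k ∈ Icc 1 N, 2 * π * (1 / k + 1 / (N + 1 - k : ℕ)) :=
        add_le_add (norm_lagWeight_le _ _ _) (sum_le_sum hpair)
    _ = 2 * π + 4 * π * ∑ k ∈ Icc 1 N, 1 / (k : ℝ) := by
        rw [← mul_sum, sum_add_distrib, sum_Icc_one_sub_reflect (fun j => 1 / (j : ℝ))]
        ring
    _ = 2 * π + 4 * π * harmonic N := by
        simp [harmonic_eq_sum_Icc]

/-- there is a constant `K` such that for every `n ≥ 2` and `λ ∈ [0, π]`,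
`∑_{k=-(n-1)}^{n-1} |w_{n,λ}(k)| ≤ K log n`. -/
theorem stmt5 : ∃ K : ℝ, ∀ n : ℕ, 2 ≤ n → ∀ lam ∈ Set.Icc (0 : ℝ) π,
    ∑ k ∈ Finset.Icc (-((n : ℤ) - 1)) ((n : ℤ) - 1), ‖lagWeight n lam k‖ ≤
      K * Real.log n := by
  refine ⟨6 * π / Real.log 2 + 4 * π, fun n hn lam _ => ?_⟩
  obtain ⟨N, rfl⟩ : ∃ N, n = N + 1 := ⟨n - 1, by omega⟩
  have hlog2 : 0 < Real.log 2 := Real.log_pos one_lt_two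
  have hlogn : Real.log 2 ≤ Real.log (N + 1 : ℕ) :=
    Real.log_le_log two_pos (by exact_mod_cast hn)
  have hharmonic : (harmonic N : ℝ) ≤ 1 + Real.log (N + 1 : ℕ) := by
    have hN : (0 : ℝ) < N := by exact_mod_cast (by omega : 0 < N)
    refine (harmonic_le_one_add_log N).trans ?_
    gcongr
    simp
  have hconst : 6 * π ≤ 6 * π / Real.log 2 * Real.log (N + 1 : ℕ) := by
    rw [div_mul_eq_mul_div, le_div_iff₀ hlog2]
    gcongr
  rw [show ((N + 1 : ℕ) : ℤ) - 1 = N by push_cast; ring]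
  calc _ ≤ 2 * π + 4 * π * harmonic N := sum_norm_lagWeight_le N lam
    _ ≤ _ := by nlinarith [pi_pos]
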